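/- arXiv:1605.08746 — 6 statements merged into one kernel-verified Lean document; each statement's English description precedes it below -/
import Mathlib

section
/- Let a < b be real numbers and let u : [a, b] → ℂ be continuously differentiable. Then (b − a)|u(b)|² ≤ ∫ₐᵇ |u(y)|² dy + (b − a) ∫ₐᵇ 2|u(y)||u′(y)| dy. -/
open MeasureTheory intervalIntegral Set

/-!
Since `(d/dt)‖u t‖² = 2⟪u t, u' t⟫ ≤ 2‖u t‖‖u' t‖`, the fundamental theorem of calculus gives
`‖u b‖² ≤ ‖u y‖² + ∫ₐᵇ 2‖u‖‖u'‖` for every `y ∈ [a, b]`; integrating this in `y` over `[a, b]`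
yields the inequality.
-/

section NormSq

variable {E : Type*} [NormedAddCommGroup E] [InnerProductSpace ℝ E] {u u' : ℝ → E} {a b : ℝ}

theorem norm_sq_sub_norm_sq_le_integral (hab : a ≤ b)
    (hu : ∀ y ∈ Icc a b, HasDerivWithinAt u (u' y) (Icc a b) y)
    (hu' : ContinuousOn u' (Icc a b)) :
    ‖u b‖ ^ 2 - ‖u a‖ ^ 2 ≤ ∫ y in a..b, 2 * ‖u y‖ * ‖u' y‖ := by
  have hu_cont : ContinuousOn u (Icc a b) := fun y hy => (hu y hy).continuousWithinAt
  refine sub_le_integral_of_hasDeriv_right_of_le (g := (‖u ·‖ ^ 2))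
    (g' := fun y => 2 * inner ℝ (u y) (u' y)) hab (hu_cont.norm.pow 2) (fun y hy => ?_)
    ((continuousOn_const.mul hu_cont.norm).mul hu'.norm).integrableOn_Icc (fun y _ => ?_)
  · exact ((hu y (Ioo_subset_Icc_self hy)).hasDerivAt (Icc_mem_nhds hy.1 hy.2)).norm_sq
      |>.hasDerivWithinAt
  · rw [mul_assoc]
    exact mul_le_mul_of_nonneg_left (real_inner_le_norm _ _) zero_le_two

theorem norm_sq_right_le_add_integral {y : ℝ} (hy : y ∈ Icc a b)
    (hu : ∀ y ∈ Icc a b, HasDerivWithinAt u (u' y) (Icc a b) y)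
    (hu' : ContinuousOn u' (Icc a b)) :
    ‖u b‖ ^ 2 ≤ ‖u y‖ ^ 2 + ∫ t in a..b, 2 * ‖u t‖ * ‖u' t‖ := by
  have hsub : Icc y b ⊆ Icc a b := Icc_subset_Icc_left hy.1
  have h_tail := norm_sq_sub_norm_sq_le_integral hy.2
    (fun t ht => (hu t (hsub ht)).mono hsub) (hu'.mono hsub)
  have hu_cont : ContinuousOn u (Icc a b) := fun t ht => (hu t ht).continuousWithinAt
  have h_mono : ∫ t in y..b, 2 * ‖u t‖ * ‖u' t‖ ≤ ∫ t in a..b, 2 * ‖u t‖ * ‖u' t‖ :=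
    integral_mono_interval hy.1 hy.2 le_rfl (ae_of_all _ fun t => by positivity)
      (((continuousOn_const.mul hu_cont.norm).mul hu'.norm).intervalIntegrable_of_Icc
        (hy.1.trans hy.2))
  linarith

end NormSq

/-- First displayed inequality in the proof of the trace estimate (Lemma 3.3):
for a continuously differentiable `u : [a, b] → ℂ`,
`(b − a)|u(b)|² ≤ ∫ₐᵇ |u(y)|² dy + (b − a) ∫ₐᵇ 2|u(y)||u′(y)| dy`. -/
theorem trace_first_inequality
    (a b : ℝ) (hab : a < b) (u u' : ℝ → ℂ)
    (hderiv : ∀ y ∈ Set.Icc a b, HasDerivWithinAt u (u' y) (Set.Icc a b) y)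
    (hcont : ContinuousOn u' (Set.Icc a b)) :
    (b - a) * ‖u b‖ ^ 2
      ≤ (∫ y in a..b, ‖u y‖ ^ 2)
        + (b - a) * ∫ y in a..b, 2 * ‖u y‖ * ‖u' y‖ := by
  set C := ∫ y in a..b, 2 * ‖u y‖ * ‖u' y‖
  have hu_sq : IntervalIntegrable (fun y => ‖u y‖ ^ 2) volume a b :=
    (ContinuousOn.pow (ContinuousOn.norm fun y hy => (hderiv y hy).continuousWithinAt) 2)
      |>.intervalIntegrable_of_Icc hab.le
  calc (b - a) * ‖u b‖ ^ 2 = ∫ _ in a..b, ‖u b‖ ^ 2 := by simp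
    _ ≤ ∫ y in a..b, (‖u y‖ ^ 2 + C) :=
      integral_mono_on hab.le intervalIntegrable_const (hu_sq.add intervalIntegrable_const)
        fun y hy => norm_sq_right_le_add_integral hy hderiv hcont
    _ = (∫ y in a..b, ‖u y‖ ^ 2) + (b - a) * C := by
      simp [integral_add hu_sq intervalIntegrable_const]
end

section
/- Let a < b be real numbers, let α ∈ ℝ, and let u : [a, b] → ℂ be continuously differentiable. Then (1 + α²)^{1/2} |u(b)|² ≤ (1 + (b − a)⁻¹)(1 + α²) ∫ₐᵇ |u(y)|² dy + ∫ₐᵇ |u′(y)|² dy. -/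
/-!
Integrating `‖u b‖² - ‖u y‖² = ∫_y^b 2⟪u, u'⟫ ≤ ∫_a^b 2‖u‖‖u'‖` over `y ∈ [a, b]` gives
`(b - a)‖u b‖² ≤ ∫‖u‖² + (b - a) ∫ 2‖u‖‖u'‖`. Young's inequality `2xy ≤ s x² + s⁻¹ y²` with
`s = (1 + α²)^{1/2} ≥ 1`, after multiplying through by `s / (b - a)`, turns this into the claim.
-/

open MeasureTheory intervalIntegral Set

section

variable {a b : ℝ}

theorem sub_le_integral_of_hasDerivWithinAt_Icc {f f' g : ℝ → ℝ} {y : ℝ}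
    (hf : ∀ x ∈ Icc a b, HasDerivWithinAt f (f' x) (Icc a b) x)
    (hg : IntegrableOn g (Icc a b)) (hfg : ∀ x ∈ Icc a b, f' x ≤ g x) (hy : y ∈ Icc a b) :
    f b - f y ≤ ∫ x in y..b, g x := by
  obtain ⟨hay, hyb⟩ := hy
  have hsub : Icc y b ⊆ Icc a b := Icc_subset_Icc_left hay
  refine sub_le_integral_of_hasDeriv_right_of_le hyb
    (fun x hx => (hf x (hsub hx)).continuousWithinAt.mono hsub) (fun x hx => ?_)
    (hg.mono_set hsub) (fun x hx => hfg x (hsub (Ioo_subset_Icc_self hx)))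
  have hx' : x ∈ Ioo a b := ⟨hay.trans_lt hx.1, hx.2⟩
  exact ((hf x (Ioo_subset_Icc_self hx')).hasDerivAt
    (Icc_mem_nhds hx'.1 hx'.2)).hasDerivWithinAt

theorem mul_le_integral_add_mul_integral_of_hasDerivWithinAt {f f' g : ℝ → ℝ} (hab : a ≤ b)
    (hf : ∀ x ∈ Icc a b, HasDerivWithinAt f (f' x) (Icc a b) x)
    (hg : IntegrableOn g (Icc a b)) (hg₀ : ∀ x ∈ Icc a b, 0 ≤ g x)
    (hfg : ∀ x ∈ Icc a b, f' x ≤ g x) :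
    (b - a) * f b ≤ (∫ x in a..b, f x) + (b - a) * ∫ x in a..b, g x := by
  have hg' : IntervalIntegrable g volume a b :=
    (intervalIntegrable_iff_integrableOn_Icc_of_le hab).2 hg
  have hpoint : ∀ y ∈ Icc a b, f b - ∫ x in a..b, g x ≤ f y := by
    intro y hy
    have hmono : ∫ x in y..b, g x ≤ ∫ x in a..b, g x :=
      integral_mono_interval hy.1 hy.2 le_rfl
        ((ae_restrict_iff' measurableSet_Ioc).2 (ae_of_all _ fun x hx =>
          hg₀ x ⟨hx.1.le, hx.2⟩)) hg'
    linarith [sub_le_integral_of_hasDerivWithinAt_Icc hf hg hfg hy]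
  have hfc : ContinuousOn f (Icc a b) := fun x hx => (hf x hx).continuousWithinAt
  have hint := integral_mono_on hab (intervalIntegrable_const (μ := volume))
    (hfc.intervalIntegrable_of_Icc hab) hpoint
  rw [intervalIntegral.integral_const, smul_eq_mul, mul_sub] at hint
  linarith

end

theorem two_mul_mul_le_mul_sq_add_inv_mul_sq {s : ℝ} (hs : 0 < s) (x y : ℝ) :
    2 * x * y ≤ s * x ^ 2 + s⁻¹ * y ^ 2 := by
  have h : 0 ≤ s⁻¹ * (s * x - y) ^ 2 := by positivity
  have hexp : s⁻¹ * (s * x - y) ^ 2 = s * x ^ 2 + s⁻¹ * y ^ 2 - 2 * x * y := by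
    field_simp
    ring
  linarith

section

variable {E : Type*} [NormedAddCommGroup E] [InnerProductSpace ℝ E] {a b s : ℝ} {u u' : ℝ → E}

theorem mul_norm_sq_le_integral_norm_sq_add
    (hab : a ≤ b) (hu : ∀ x ∈ Icc a b, HasDerivWithinAt u (u' x) (Icc a b) x)
    (hu' : ContinuousOn u' (Icc a b)) :
    (b - a) * ‖u b‖ ^ 2
      ≤ (∫ x in a..b, ‖u x‖ ^ 2) + (b - a) * ∫ x in a..b, 2 * ‖u x‖ * ‖u' x‖ := by
  have huc : ContinuousOn u (Icc a b) := fun x hx => (hu x hx).continuousWithinAt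
  refine mul_le_integral_add_mul_integral_of_hasDerivWithinAt hab (fun x hx => (hu x hx).norm_sq)
    (((continuousOn_const.mul huc.norm).mul hu'.norm).integrableOn_Icc)
    (fun x _ => by positivity) (fun x _ => ?_)
  rw [mul_assoc]
  exact mul_le_mul_of_nonneg_left (real_inner_le_norm _ _) zero_le_two

theorem mul_norm_sq_le_integral_norm_sq_of_one_le
    (hab : a < b) (hs : 1 ≤ s) (hu : ∀ x ∈ Icc a b, HasDerivWithinAt u (u' x) (Icc a b) x)
    (hu' : ContinuousOn u' (Icc a b)) :
    s * ‖u b‖ ^ 2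
      ≤ (1 + (b - a)⁻¹) * s ^ 2 * (∫ x in a..b, ‖u x‖ ^ 2) + ∫ x in a..b, ‖u' x‖ ^ 2 := by
  have hs₀ : 0 < s := one_pos.trans_le hs
  have hba : 0 < b - a := sub_pos.2 hab
  have huc : ContinuousOn u (Icc a b) := fun x hx => (hu x hx).continuousWithinAt
  have hU : IntervalIntegrable (fun x => ‖u x‖ ^ 2) volume a b :=
    (huc.norm.pow 2).intervalIntegrable_of_Icc hab.le
  have hU' : IntervalIntegrable (fun x => ‖u' x‖ ^ 2) volume a b :=
    (hu'.norm.pow 2).intervalIntegrable_of_Icc hab.le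
  set U := ∫ x in a..b, ‖u x‖ ^ 2
  set U' := ∫ x in a..b, ‖u' x‖ ^ 2
  have hU₀ : 0 ≤ U := integral_nonneg hab.le fun x _ => by positivity
  have hyoung : ∫ x in a..b, 2 * ‖u x‖ * ‖u' x‖ ≤ s * U + s⁻¹ * U' := by
    rw [← intervalIntegral.integral_const_mul, ← intervalIntegral.integral_const_mul,
      ← integral_add (hU.const_mul s) (hU'.const_mul s⁻¹)]
    exact integral_mono_on hab.le
      (((continuousOn_const.mul huc.norm).mul hu'.norm).intervalIntegrable_of_Icc hab.le)
      ((hU.const_mul s).add (hU'.const_mul s⁻¹))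
      fun x _ => two_mul_mul_le_mul_sq_add_inv_mul_sq hs₀ _ _
  have htrace : ‖u b‖ ^ 2 ≤ (b - a)⁻¹ * U + (s * U + s⁻¹ * U') := by
    have h := (le_inv_mul_iff₀ hba).2 (mul_norm_sq_le_integral_norm_sq_add hab.le hu hu')
    rw [mul_add, inv_mul_cancel_left₀ hba.ne'] at h
    linarith
  calc s * ‖u b‖ ^ 2 ≤ s * ((b - a)⁻¹ * U + (s * U + s⁻¹ * U')) :=
        mul_le_mul_of_nonneg_left htrace hs₀.le
    _ = s * (b - a)⁻¹ * U + s ^ 2 * U + U' := by field_simp; ring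
    _ ≤ s ^ 2 * (b - a)⁻¹ * U + s ^ 2 * U + U' := by
        gcongr
        nlinarith
    _ = (1 + (b - a)⁻¹) * s ^ 2 * U + U' := by ring

end

/-- The key one-dimensional (per Fourier mode) inequality in the proof of the
trace estimate (Lemma 3.3): for a continuously differentiable `u : [a, b] → ℂ`,
`(1 + α²)^{1/2} |u(b)|² ≤ (1 + (b − a)⁻¹)(1 + α²) ∫ₐᵇ |u|² + ∫ₐᵇ |u′|²`. -/
theorem trace_mode_inequality
    (a b α : ℝ) (hab : a < b) (u u' : ℝ → ℂ)
    (hderiv : ∀ y ∈ Set.Icc a b, HasDerivWithinAt u (u' y) (Set.Icc a b) y)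
    (hcont : ContinuousOn u' (Set.Icc a b)) :
    Real.sqrt (1 + α ^ 2) * ‖u b‖ ^ 2
      ≤ (1 + (b - a)⁻¹) * (1 + α ^ 2) * (∫ y in a..b, ‖u y‖ ^ 2)
        + ∫ y in a..b, ‖u' y‖ ^ 2 := by
  have hs : 1 ≤ Real.sqrt (1 + α ^ 2) :=
    Real.one_le_sqrt.2 (le_add_of_nonneg_right (sq_nonneg α))
  simpa only [Real.sq_sqrt (by positivity : (0 : ℝ) ≤ 1 + α ^ 2)] using
    mul_norm_sq_le_integral_norm_sq_of_one_le hab hs hderiv hcont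
end

section
/- Let a < b be real numbers, Λ > 0, α ∈ ℝ, and for n ∈ ℤ set αₙ := α + 2πn/Λ. Let (uₙ)_{n∈ℤ} be a family of continuously differentiable functions uₙ : [a, b] → ℂ such that the family n ↦ ∫ₐᵇ ((1 + αₙ²)|uₙ(y)|² + |uₙ′(y)|²) dy is summable. Then the family n ↦ (1 + αₙ²)^{1/2}|uₙ(b)|² is summable and Σ_{n∈ℤ} (1 + αₙ²)^{1/2} |uₙ(b)|² ≤ (1 + (b − a)⁻¹) Σ_{n∈ℤ} ∫ₐᵇ ((1 + αₙ²)|uₙ(y)|² + |uₙ′(y)|²) dy. -/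
/-!
With the weight `w(y) = (y - a)/(b - a)`, which vanishes at `a` and equals `1` at `b`, the
fundamental theorem of calculus gives `‖u b‖² = ∫ₐᵇ (w ‖u‖²)'`. Expanding the derivative,
`β (w ‖u‖²)' ≤ β (b - a)⁻¹ ‖u‖² + 2 β ‖u‖ ‖u'‖ ≤ (1 + (b - a)⁻¹) (β² ‖u‖² + ‖u'‖²)` for `β ≥ 1`.
Taking `β = (1 + αₙ²)^{1/2}` for the `n`-th coefficient and summing over `n` gives the theorem.
-/

open MeasureTheory Set
open scoped RealInnerProductSpace

variable {E : Type*} [NormedAddCommGroup E] [InnerProductSpace ℝ E]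

theorem norm_sq_eq_integral_weighted_deriv {a b : ℝ} (hab : a < b) {u u' : ℝ → E}
    (hu : ∀ y ∈ Icc a b, HasDerivWithinAt u (u' y) (Icc a b) y)
    (hu' : ContinuousOn u' (Icc a b)) :
    ‖u b‖ ^ 2 =
      ∫ y in a..b, ((b - a)⁻¹ * ‖u y‖ ^ 2 + (y - a) / (b - a) * (2 * ⟪u y, u' y⟫)) := by
  have hIcc : uIcc a b = Icc a b := uIcc_of_le hab.le
  have hweight : ∀ y ∈ uIcc a b,
      HasDerivWithinAt (fun y => (y - a) / (b - a)) (b - a)⁻¹ (uIcc a b) y := fun y _ => by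
    simpa [div_eq_mul_inv] using ((hasDerivWithinAt_id y _).sub_const a).div_const (b - a)
  have hnorm_sq : ∀ y ∈ uIcc a b,
      HasDerivWithinAt (‖u ·‖ ^ 2) (2 * ⟪u y, u' y⟫) (uIcc a b) y := fun y hy => by
    rw [hIcc] at hy ⊢
    exact (hu y hy).norm_sq
  have hinner : IntervalIntegrable (fun y => 2 * ⟪u y, u' y⟫) volume a b :=
    ContinuousOn.intervalIntegrable_of_Icc hab.le
      (continuousOn_const.mul ((HasDerivWithinAt.continuousOn hu).inner hu'))
  rw [intervalIntegral.integral_deriv_mul_eq_sub_of_hasDerivWithinAt hweight hnorm_sq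
    intervalIntegrable_const hinner]
  simp [(sub_pos.2 hab).ne']

theorem weighted_integrand_le {β c t : ℝ} (hβ : 1 ≤ β) (hc : 0 ≤ c) (ht₀ : 0 ≤ t) (ht₁ : t ≤ 1)
    (x x' : E) :
    β * (c * ‖x‖ ^ 2 + t * (2 * ⟪x, x'⟫)) ≤ (1 + c) * (β ^ 2 * ‖x‖ ^ 2 + ‖x'‖ ^ 2) := by
  have hinner : t * ⟪x, x'⟫ ≤ ‖x‖ * ‖x'‖ :=
    calc t * ⟪x, x'⟫ ≤ t * |⟪x, x'⟫| := mul_le_mul_of_nonneg_left (le_abs_self _) ht₀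
      _ ≤ |⟪x, x'⟫| := mul_le_of_le_one_left (abs_nonneg _) ht₁
      _ ≤ ‖x‖ * ‖x'‖ := abs_real_inner_le_norm x x'
  have hβsq : β ≤ β ^ 2 := by nlinarith
  nlinarith [sq_nonneg (β * ‖x‖ - ‖x'‖),
    mul_le_mul_of_nonneg_right hβsq (mul_nonneg hc (sq_nonneg ‖x‖)), mul_nonneg hc (sq_nonneg ‖x'‖)]

theorem mul_norm_sq_le_integral {a b : ℝ} (hab : a < b) {β : ℝ} (hβ : 1 ≤ β) {u u' : ℝ → E}
    (hu : ∀ y ∈ Icc a b, HasDerivWithinAt u (u' y) (Icc a b) y)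
    (hu' : ContinuousOn u' (Icc a b)) :
    β * ‖u b‖ ^ 2 ≤ (1 + (b - a)⁻¹) * ∫ y in a..b, (β ^ 2 * ‖u y‖ ^ 2 + ‖u' y‖ ^ 2) := by
  have hba : 0 < b - a := sub_pos.2 hab
  have hucont : ContinuousOn u (Icc a b) := HasDerivWithinAt.continuousOn hu
  rw [norm_sq_eq_integral_weighted_deriv hab hu hu', ← intervalIntegral.integral_const_mul,
    ← intervalIntegral.integral_const_mul]
  refine intervalIntegral.integral_mono_on hab.le ?_ ?_ fun y hy =>
    weighted_integrand_le hβ (inv_nonneg.2 hba.le) (div_nonneg (sub_nonneg.2 hy.1) hba.le)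
      ((div_le_one hba).2 (sub_le_sub_right hy.2 a)) _ _
  all_goals exact ContinuousOn.intervalIntegrable_of_Icc hab.le (by fun_prop)

theorem trace_lemma_fourier_general
    (a b : ℝ) (hab : a < b)
    (αn : ℤ → ℝ)
    (u u' : ℤ → ℝ → ℂ)
    (hderiv : ∀ n : ℤ, ∀ y ∈ Set.Icc a b,
      HasDerivWithinAt (u n) (u' n y) (Set.Icc a b) y)
    (hcont : ∀ n : ℤ, ContinuousOn (u' n) (Set.Icc a b))
    (hsummable : Summable fun n : ℤ =>
      ∫ y in a..b, ((1 + (αn n) ^ 2) * ‖u n y‖ ^ 2 + ‖u' n y‖ ^ 2)) :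
    (Summable fun n : ℤ => Real.sqrt (1 + (αn n) ^ 2) * ‖u n b‖ ^ 2) ∧
    (∑' n : ℤ, Real.sqrt (1 + (αn n) ^ 2) * ‖u n b‖ ^ 2)
      ≤ (1 + (b - a)⁻¹) *
        ∑' n : ℤ, ∫ y in a..b, ((1 + (αn n) ^ 2) * ‖u n y‖ ^ 2 + ‖u' n y‖ ^ 2) := by
  have hcoeff : ∀ n : ℤ, Real.sqrt (1 + (αn n) ^ 2) * ‖u n b‖ ^ 2 ≤
      (1 + (b - a)⁻¹) * ∫ y in a..b, ((1 + (αn n) ^ 2) * ‖u n y‖ ^ 2 + ‖u' n y‖ ^ 2) := by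
    intro n
    have h := mul_norm_sq_le_integral hab
      (Real.one_le_sqrt.2 (le_add_of_nonneg_right (sq_nonneg (αn n)))) (hderiv n) (hcont n)
    rwa [Real.sq_sqrt (by positivity)] at h
  have hsum := hsummable.mul_left (1 + (b - a)⁻¹)
  have hs := Summable.of_nonneg_of_le (fun n => by positivity) hcoeff hsum
  exact ⟨hs, (hs.tsum_le_tsum hcoeff hsum).trans_eq tsum_mul_left⟩

/-- Fourier-coefficient form of the trace lemma (Lemma 3.3):
`Σₙ (1 + αₙ²)^{1/2}|uₙ(b)|² ≤ (1 + (b − a)⁻¹) Σₙ ∫ₐᵇ ((1 + αₙ²)|uₙ|² + |uₙ′|²)`. -/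
theorem trace_lemma_fourier
    (a b Λ α : ℝ) (hab : a < b) (hΛ : 0 < Λ)
    (αn : ℤ → ℝ) (hαn : ∀ n : ℤ, αn n = α + 2 * Real.pi * (n : ℝ) / Λ)
    (u u' : ℤ → ℝ → ℂ)
    (hderiv : ∀ n : ℤ, ∀ y ∈ Set.Icc a b,
      HasDerivWithinAt (u n) (u' n y) (Set.Icc a b) y)
    (hcont : ∀ n : ℤ, ContinuousOn (u' n) (Set.Icc a b))
    (hsummable : Summable fun n : ℤ =>
      ∫ y in a..b, ((1 + (αn n) ^ 2) * ‖u n y‖ ^ 2 + ‖u' n y‖ ^ 2)) :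
    (Summable fun n : ℤ => Real.sqrt (1 + (αn n) ^ 2) * ‖u n b‖ ^ 2) ∧
    (∑' n : ℤ, Real.sqrt (1 + (αn n) ^ 2) * ‖u n b‖ ^ 2)
      ≤ (1 + (b - a)⁻¹) *
        ∑' n : ℤ, ∫ y in a..b, ((1 + (αn n) ^ 2) * ‖u n y‖ ^ 2 + ‖u' n y‖ ^ 2) :=
  trace_lemma_fourier_general a b hab αn u u' hderiv hcont hsummable
end

section
/- Let κ₁, κ₂ be real wavenumbers with 0 < κ₁ < κ₂, and let α ∈ ℝ with |α| ≠ κ₁ and |α| ≠ κ₂. For j = 1, 2 define βⱼ ∈ ℂ by βⱼ := (κⱼ² − α²)^{1/2} if |α| < κⱼ and βⱼ := i(α² − κⱼ²)^{1/2} if |α| > κⱼ, and set χ := α² + β₁β₂. Then κ₁² < |χ| < κ₂². -/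
/-!
Write `a = α²`, `p = κ₁²`, `q = κ₂²`. When `a < p` or `a > q` both `βⱼ` are real, resp. both
purely imaginary, so `χ = a + √(p - a)√(q - a)`, resp. `χ = a - √(a - q)√(a - p)`, is real and
the bounds come from the strict geometric-mean inequality `x < √x √y < y` for `0 < x < y`. When `p < a < q` the product `β₁β₂` is
purely imaginary and `|χ|² = a² + (a - p)(q - a) = p² + (p + q)(a - p) = q² - (p + q)(q - a)`.
-/

open Complex

/-- The paper's `β` for `k = κ²` and `a = α²`. -/
noncomputable def verticalWavenumber (k a : ℝ) : ℂ :=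
  if a < k then (Real.sqrt (k - a) : ℂ) else I * (Real.sqrt (a - k) : ℂ)

/-- The paper's `χ` for `p = κ₁²`, `q = κ₂²` and `a = α²`. -/
noncomputable def chi (p q a : ℝ) : ℂ :=
  a + verticalWavenumber p a * verticalWavenumber q a

lemma verticalWavenumber_eq_ite_abs_lt {κ : ℝ} (hκ : 0 ≤ κ) (α : ℝ) :
    verticalWavenumber (κ ^ 2) (α ^ 2) = if |α| < κ then (Real.sqrt (κ ^ 2 - α ^ 2) : ℂ)
      else I * (Real.sqrt (α ^ 2 - κ ^ 2) : ℂ) := by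
  simp only [verticalWavenumber, sq_lt_sq, abs_of_nonneg hκ]

lemma Real.lt_sqrt_mul_sqrt_lt {x y : ℝ} (hx : 0 < x) (hxy : x < y) :
    x < √x * √y ∧ √x * √y < y := by
  have hsqrt : √x < √y := Real.sqrt_lt_sqrt hx.le hxy
  have hx' : 0 < √x := Real.sqrt_pos.mpr hx
  constructor
  · calc x = √x * √x := (Real.mul_self_sqrt hx.le).symm
      _ < √x * √y := mul_lt_mul_of_pos_left hsqrt hx'
  · calc √x * √y < √y * √y := mul_lt_mul_of_pos_right hsqrt (hx'.trans hsqrt)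
      _ = y := Real.mul_self_sqrt (hx.trans hxy).le

section

variable {p q a : ℝ}

lemma norm_chi_mem_Ioo_of_lt (hp : 0 < p) (hap : a < p) (hpq : p < q) :
    p < ‖chi p q a‖ ∧ ‖chi p q a‖ < q := by
  obtain ⟨hlow, hupp⟩ := Real.lt_sqrt_mul_sqrt_lt (sub_pos.mpr hap) (sub_lt_sub_right hpq a)
  have hχ : chi p q a = ((a + √(p - a) * √(q - a) : ℝ) : ℂ) := by
    simp only [chi, verticalWavenumber, if_pos hap, if_pos (hap.trans hpq)]
    push_cast; ring
  rw [hχ, Complex.norm_real, Real.norm_eq_abs, abs_of_pos (by linarith)]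
  constructor <;> linarith

lemma norm_chi_mem_Ioo_of_gt (hp : 0 < p) (hpq : p < q) (hqa : q < a) :
    p < ‖chi p q a‖ ∧ ‖chi p q a‖ < q := by
  obtain ⟨hlow, hupp⟩ := Real.lt_sqrt_mul_sqrt_lt (sub_pos.mpr hqa) (sub_lt_sub_left hpq a)
  have hχ : chi p q a = ((a - √(a - q) * √(a - p) : ℝ) : ℂ) := by
    simp only [chi, verticalWavenumber, if_neg (hpq.trans hqa).not_gt, if_neg hqa.not_gt]
    push_cast
    linear_combination (√(a - q) * √(a - p) : ℂ) * I_mul_I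
  rw [hχ, Complex.norm_real, Real.norm_eq_abs, abs_of_pos (by linarith)]
  constructor <;> linarith

lemma norm_chi_mem_Ioo_of_mem_Ioo (hp : 0 < p) (hpa : p < a) (haq : a < q) :
    p < ‖chi p q a‖ ∧ ‖chi p q a‖ < q := by
  have hχ : chi p q a = (a : ℂ) + ((√(a - p) * √(q - a) : ℝ) : ℂ) * I := by
    simp only [chi, verticalWavenumber, if_neg hpa.not_gt, if_pos haq]
    push_cast; ring
  have hnormSq : a ^ 2 + (√(a - p) * √(q - a)) ^ 2 = a ^ 2 + (a - p) * (q - a) := by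
    rw [mul_pow, Real.sq_sqrt (sub_pos.mpr hpa).le, Real.sq_sqrt (sub_pos.mpr haq).le]
  rw [hχ, Complex.norm_add_mul_I, hnormSq]
  constructor
  · rw [Real.lt_sqrt hp.le]
    nlinarith
  · rw [Real.sqrt_lt' (by linarith)]
    nlinarith

lemma norm_chi_mem_Ioo (hp : 0 < p) (hpq : p < q) (hap : a ≠ p) (haq : a ≠ q) :
    p < ‖chi p q a‖ ∧ ‖chi p q a‖ < q := by
  rcases hap.lt_or_gt with hap | hpa
  · exact norm_chi_mem_Ioo_of_lt hp hap hpq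
  rcases haq.lt_or_gt with haq | hqa
  · exact norm_chi_mem_Ioo_of_mem_Ioo hp hpa haq
  · exact norm_chi_mem_Ioo_of_gt hp hpq hqa

end

/-- Proposition A.1: with `βⱼ = (κⱼ² − α²)^{1/2}` for `|α| < κⱼ` and
`βⱼ = i(α² − κⱼ²)^{1/2}` for `|α| > κⱼ`, the DtN denominator
`χ = α² + β₁β₂` satisfies `κ₁² < |χ| < κ₂²`. -/
theorem chi_bounds
    (κ₁ κ₂ α : ℝ) (hκ₁ : 0 < κ₁) (hκ₁₂ : κ₁ < κ₂)
    (hne₁ : |α| ≠ κ₁) (hne₂ : |α| ≠ κ₂)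
    (β₁ β₂ χ : ℂ)
    (hβ₁ : β₁ = if |α| < κ₁ then (Real.sqrt (κ₁ ^ 2 - α ^ 2) : ℂ)
      else Complex.I * (Real.sqrt (α ^ 2 - κ₁ ^ 2) : ℂ))
    (hβ₂ : β₂ = if |α| < κ₂ then (Real.sqrt (κ₂ ^ 2 - α ^ 2) : ℂ)
      else Complex.I * (Real.sqrt (α ^ 2 - κ₂ ^ 2) : ℂ))
    (hχ : χ = (α : ℂ) ^ 2 + β₁ * β₂) :
    κ₁ ^ 2 < ‖χ‖ ∧ ‖χ‖ < κ₂ ^ 2 := by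
  have hκ₂ : 0 < κ₂ := hκ₁.trans hκ₁₂
  have hsq_ne {κ : ℝ} (hκ : 0 < κ) (hne : |α| ≠ κ) : α ^ 2 ≠ κ ^ 2 := by
    rwa [Ne, sq_eq_sq_iff_abs_eq_abs, abs_of_pos hκ]
  rw [← verticalWavenumber_eq_ite_abs_lt hκ₁.le] at hβ₁
  rw [← verticalWavenumber_eq_ite_abs_lt hκ₂.le] at hβ₂
  rw [hχ, hβ₁, hβ₂, ← Complex.ofReal_pow]
  exact norm_chi_mem_Ioo (by positivity) (pow_lt_pow_left₀ hκ₁₂ hκ₁.le two_ne_zero)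
    (hsq_ne hκ₁ hne₁) (hsq_ne hκ₂ hne₂)
end

section
/- Let s, t, k be real numbers with t > s > 0 and k ≥ 2. Then t^k / e^{(t² − s²)^{1/2}/2} ≤ (s² + k²)^{k/2}. -/
/-- Elementary bound: `2 log x ≤ x` for `x > 0`. -/
lemma two_log_le_self (x : ℝ) (hx : 0 < x) : 2 * Real.log x ≤ x := by
  have hsx : 0 < Real.sqrt x := Real.sqrt_pos.mpr hx
  have h1 : Real.log (Real.sqrt x) = Real.log x / 2 := Real.log_sqrt hx.le
  have h2 : Real.log (Real.sqrt x) ≤ Real.sqrt x - 1 :=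
    Real.log_le_sub_one_of_pos hsx
  have h3 : Real.sqrt x ^ 2 = x := Real.sq_sqrt hx.le
  nlinarith [sq_nonneg (Real.sqrt x - 2)]

/-- Proposition A.3: for `t > s > 0` and `k ≥ 2`,
`t^k / e^{(t² − s²)^{1/2}/2} ≤ (s² + k²)^{k/2}`. -/
theorem g4_bound
    (s t k : ℝ) (hs : 0 < s) (hst : s < t) (hk : 2 ≤ k) :
    t ^ k / Real.exp (Real.sqrt (t ^ 2 - s ^ 2) / 2)
      ≤ (s ^ 2 + k ^ 2) ^ (k / 2) := by
  have ht : 0 < t := hs.trans hst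
  have hk0 : (0:ℝ) < k := by linarith
  set τ := Real.sqrt (t ^ 2 - s ^ 2) with hτdef
  have hd : 0 < t ^ 2 - s ^ 2 := by nlinarith
  have hτ : 0 < τ := Real.sqrt_pos.mpr hd
  have hτ2 : τ ^ 2 = t ^ 2 - s ^ 2 := Real.sq_sqrt hd.le
  have hLHS : t ^ k / Real.exp (τ / 2) = Real.exp (k * Real.log t - τ / 2) := by
    rw [Real.rpow_def_of_pos ht, ← Real.exp_sub]
    ring_nf
  have hRHS : (s ^ 2 + k ^ 2) ^ (k / 2)
      = Real.exp ((k / 2) * Real.log (s ^ 2 + k ^ 2)) := by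
    rw [Real.rpow_def_of_pos (by positivity)]
    ring_nf
  rw [hLHS, hRHS, Real.exp_le_exp]
  -- reduce to a logarithmic inequality
  have hts : τ ^ 2 + s ^ 2 = t ^ 2 := by linarith
  have hlogt : 2 * Real.log t = Real.log (τ ^ 2 + s ^ 2) := by
    rw [hts, Real.log_pow]
    push_cast
    ring
  -- key inequality: k * log (τ² + s²) ≤ τ + k * log (s² + k²)
  have key : k * Real.log (τ ^ 2 + s ^ 2) ≤ τ + k * Real.log (s ^ 2 + k ^ 2) := by
    rcases le_total τ k with hcase | hcase
    · -- τ ≤ k : monotonicity of log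
      have h1 : Real.log (τ ^ 2 + s ^ 2) ≤ Real.log (s ^ 2 + k ^ 2) := by
        apply Real.log_le_log (by positivity)
        nlinarith
      nlinarith
    · -- k ≤ τ
      have hlt : (τ ^ 2 + s ^ 2) * k ^ 2 ≤ τ ^ 2 * (s ^ 2 + k ^ 2) := by nlinarith [mul_self_le_mul_self hk0.le hcase, sq_nonneg s, sq_nonneg (s*τ), sq_nonneg (s*k)]
      have h1 : Real.log ((τ ^ 2 + s ^ 2) * k ^ 2)
          ≤ Real.log (τ ^ 2 * (s ^ 2 + k ^ 2)) := by
        apply Real.log_le_log (by positivity) hlt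
      rw [Real.log_mul (by positivity) (by positivity),
          Real.log_mul (by positivity) (by positivity),
          Real.log_pow, Real.log_pow] at h1
      push_cast at h1
      have h2 : 2 * Real.log (τ / k) ≤ τ / k := two_log_le_self _ (by positivity)
      rw [Real.log_div hτ.ne' hk0.ne'] at h2
      have h3 : Real.log (τ ^ 2 + s ^ 2) ≤ Real.log (s ^ 2 + k ^ 2) + τ / k := by
        linarith
      have h4 := mul_le_mul_of_nonneg_left h3 hk0.le
      rw [mul_add, mul_div_cancel₀ _ hk0.ne'] at h4
      linarith
  nlinarith [key]
end

section
/- Let κ₁, κ₂ be real wavenumbers with 0 < κ₁ < κ₂, and let α ∈ ℝ with |α| < κ₁. Set Δⱼ := (κⱼ² − α²)^{1/2} for j = 1, 2. Let ζ ∈ ℂ with Re ζ > 0, Im ζ > 0, and e^{Δ₁ Im ζ} ≥ 3. Define, for j = 1, 2, δⱼ := (e^{iΔ₂ζ} − e^{iΔ₁ζ})/(e^{−iΔⱼζ} − e^{iΔⱼζ}) (the denominators are nonzero), set χ := α² + Δ₁Δ₂ and χ̂ := χ + 4(δ₂ − δ₁ − δ₁δ₂) α² Δ₁Δ₂ / χ.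 Then |χ̂ − χ| ≤ 24 Δ₁Δ₂ / (e^{Δ₁ Im ζ} − 1). -/
/-!
The PML coefficients `δⱼ` are quotients of a difference of two decaying exponentials, of norm
at most `2`, by `e^{-iΔⱼζ} - e^{iΔⱼζ}`, whose norm is at least `e^{Δⱼ Im ζ} - 1 ≥ e^{Δ₁ Im ζ} - 1`.
Hence `‖δⱼ‖ ≤ 2 / (e^{Δ₁ Im ζ} - 1) ≤ 1`, so `‖δ₂ - δ₁ - δ₁δ₂‖ ≤ 6 / (e^{Δ₁ Im ζ} - 1)`, and the
factor `α² / χ = α² / (α² + Δ₁Δ₂)` lies in `[0, 1]`.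
-/

namespace Complex

lemma norm_exp_I_mul_ofReal_mul (Δ : ℝ) (ζ : ℂ) :
    ‖exp (I * Δ * ζ)‖ = Real.exp (-(Δ * ζ.im)) := by
  simp [norm_exp, mul_re, mul_im]

lemma norm_exp_neg_I_mul_ofReal_mul (Δ : ℝ) (ζ : ℂ) :
    ‖exp (-(I * Δ * ζ))‖ = Real.exp (Δ * ζ.im) := by
  simp [norm_exp, mul_re, mul_im]

section UpperHalfPlane

variable {Δ : ℝ} {ζ : ℂ}

lemma norm_exp_I_mul_ofReal_mul_le_one (hΔ : 0 ≤ Δ) (hζ : 0 ≤ ζ.im) :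
    ‖exp (I * Δ * ζ)‖ ≤ 1 := by
  rw [norm_exp_I_mul_ofReal_mul, Real.exp_le_one_iff, neg_nonpos]
  positivity

lemma exp_mul_im_sub_one_le_norm_exp_neg_sub_exp (hΔ : 0 ≤ Δ) (hζ : 0 ≤ ζ.im) :
    Real.exp (Δ * ζ.im) - 1 ≤ ‖exp (-(I * Δ * ζ)) - exp (I * Δ * ζ)‖ := by
  have h := norm_sub_norm_le (exp (-(I * Δ * ζ))) (exp (I * Δ * ζ))
  rw [norm_exp_neg_I_mul_ofReal_mul] at h
  linarith [norm_exp_I_mul_ofReal_mul_le_one hΔ hζ]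

lemma norm_exp_sub_exp_div_exp_neg_sub_exp_le {Δ₁ Δ₂ : ℝ} (hΔ₁ : 0 ≤ Δ₁) (hΔ₂ : 0 ≤ Δ₂)
    (hΔ : Δ₁ ≤ Δ) (hζ : 0 ≤ ζ.im) (hE : 1 < Real.exp (Δ₁ * ζ.im)) :
    ‖(exp (I * Δ₂ * ζ) - exp (I * Δ₁ * ζ)) / (exp (-(I * Δ * ζ)) - exp (I * Δ * ζ))‖ ≤
      2 / (Real.exp (Δ₁ * ζ.im) - 1) := by
  have hnum : ‖exp (I * Δ₂ * ζ) - exp (I * Δ₁ * ζ)‖ ≤ 2 := by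
    refine (norm_sub_le _ _).trans ?_
    linarith [norm_exp_I_mul_ofReal_mul_le_one hΔ₂ hζ, norm_exp_I_mul_ofReal_mul_le_one hΔ₁ hζ]
  have hden : Real.exp (Δ₁ * ζ.im) - 1 ≤ ‖exp (-(I * Δ * ζ)) - exp (I * Δ * ζ)‖ := by
    have hmono : Real.exp (Δ₁ * ζ.im) ≤ Real.exp (Δ * ζ.im) :=
      Real.exp_le_exp.mpr (mul_le_mul_of_nonneg_right hΔ hζ)
    linarith [exp_mul_im_sub_one_le_norm_exp_neg_sub_exp (hΔ₁.trans hΔ) hζ]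
  rw [norm_div]
  exact div_le_div₀ zero_le_two hnum (by linarith) hden

end UpperHalfPlane

lemma norm_sub_sub_mul_le {δ₁ δ₂ : ℂ} {ε : ℝ} (h₁ : ‖δ₁‖ ≤ ε) (h₂ : ‖δ₂‖ ≤ ε) (hε : ε ≤ 1) :
    ‖δ₂ - δ₁ - δ₁ * δ₂‖ ≤ 3 * ε := by
  have hprod : ‖δ₁ * δ₂‖ ≤ ε := by
    rw [norm_mul]
    nlinarith [norm_nonneg δ₁, norm_nonneg δ₂]
  calc ‖δ₂ - δ₁ - δ₁ * δ₂‖ ≤ ‖δ₂‖ + ‖δ₁‖ + ‖δ₁ * δ₂‖ :=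
        (norm_sub_le _ _).trans (by gcongr; exact norm_sub_le _ _)
    _ ≤ 3 * ε := by linarith

lemma norm_mul_sq_div_sq_add_le (z : ℂ) (a : ℝ) {b : ℝ} (hb : 0 ≤ b) :
    ‖z * (a : ℂ) ^ 2 / ((a ^ 2 + b : ℝ) : ℂ)‖ ≤ ‖z‖ := by
  rw [norm_div, norm_mul, norm_pow, norm_real, norm_real, Real.norm_eq_abs, Real.norm_eq_abs,
    sq_abs, abs_of_nonneg (by positivity)]
  exact div_le_of_le_mul₀ (by positivity) (norm_nonneg z)
    (mul_le_mul_of_nonneg_left (le_add_of_nonneg_right hb) (norm_nonneg z))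

end Complex

theorem chi_hat_sub_chi_estimate_general
    (κ₁ κ₂ α : ℝ) (hκ₁ : 0 < κ₁) (hκ₁₂ : κ₁ < κ₂)
    (Δ₁ Δ₂ : ℝ)
    (hΔ₁ : Δ₁ = Real.sqrt (κ₁ ^ 2 - α ^ 2))
    (hΔ₂ : Δ₂ = Real.sqrt (κ₂ ^ 2 - α ^ 2))
    (ζ : ℂ) (hζim : 0 < ζ.im)
    (hbig : 3 ≤ Real.exp (Δ₁ * ζ.im))
    (δ₁ δ₂ : ℂ)
    (hδ₁ : δ₁ = (Complex.exp (Complex.I * (Δ₂ : ℂ) * ζ) - Complex.exp (Complex.I * (Δ₁ : ℂ) * ζ)) /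
      (Complex.exp (-(Complex.I * (Δ₁ : ℂ) * ζ)) - Complex.exp (Complex.I * (Δ₁ : ℂ) * ζ)))
    (hδ₂ : δ₂ = (Complex.exp (Complex.I * (Δ₂ : ℂ) * ζ) - Complex.exp (Complex.I * (Δ₁ : ℂ) * ζ)) /
      (Complex.exp (-(Complex.I * (Δ₂ : ℂ) * ζ)) - Complex.exp (Complex.I * (Δ₂ : ℂ) * ζ)))
    (χ : ℝ) (hχ : χ = α ^ 2 + Δ₁ * Δ₂)
    (χhat : ℂ)
    (hχhat : χhat = (χ : ℂ) +
      4 * (δ₂ - δ₁ - δ₁ * δ₂) * (α : ℂ) ^ 2 * (Δ₁ : ℂ) * (Δ₂ : ℂ) / (χ : ℂ)) :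
    ‖χhat - (χ : ℂ)‖ ≤ 24 * Δ₁ * Δ₂ / (Real.exp (Δ₁ * ζ.im) - 1) := by
  set E := Real.exp (Δ₁ * ζ.im)
  have hΔ₁0 : 0 ≤ Δ₁ := hΔ₁ ▸ Real.sqrt_nonneg _
  have hΔ₂0 : 0 ≤ Δ₂ := hΔ₂ ▸ Real.sqrt_nonneg _
  have hΔ₁₂ : Δ₁ ≤ Δ₂ := by
    rw [hΔ₁, hΔ₂]
    gcongr
  have hb₁ : ‖δ₁‖ ≤ 2 / (E - 1) := hδ₁ ▸ Complex.norm_exp_sub_exp_div_exp_neg_sub_exp_le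
    hΔ₁0 hΔ₂0 le_rfl hζim.le (by linarith)
  have hb₂ : ‖δ₂‖ ≤ 2 / (E - 1) := hδ₂ ▸ Complex.norm_exp_sub_exp_div_exp_neg_sub_exp_le
    hΔ₁0 hΔ₂0 hΔ₁₂ hζim.le (by linarith)
  have hD := Complex.norm_sub_sub_mul_le hb₁ hb₂ (by rw [div_le_one₀ (by linarith)]; linarith)
  have hdiff : χhat - χ =
      4 * (δ₂ - δ₁ - δ₁ * δ₂) * Δ₁ * Δ₂ * (α : ℂ) ^ 2 / (α ^ 2 + Δ₁ * Δ₂ : ℝ) := by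
    rw [hχhat, ← hχ]
    ring
  calc ‖χhat - χ‖ ≤ ‖4 * (δ₂ - δ₁ - δ₁ * δ₂) * Δ₁ * Δ₂‖ :=
        hdiff ▸ Complex.norm_mul_sq_div_sq_add_le _ α (by positivity)
    _ = 4 * ‖δ₂ - δ₁ - δ₁ * δ₂‖ * Δ₁ * Δ₂ := by
        simp [Complex.norm_real, abs_of_nonneg hΔ₁0, abs_of_nonneg hΔ₂0]
    _ ≤ 4 * (3 * (2 / (E - 1))) * Δ₁ * Δ₂ := by gcongr
    _ = 24 * Δ₁ * Δ₂ / (E - 1) := by ring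

/-- Estimate of `|χ̂ − χ|` for a mode propagating for both the compressional
and shear waves (case (i) in the proof of Proposition A.4). -/
theorem chi_hat_sub_chi_estimate
    (κ₁ κ₂ α : ℝ) (hκ₁ : 0 < κ₁) (hκ₁₂ : κ₁ < κ₂) (hα : |α| < κ₁)
    (Δ₁ Δ₂ : ℝ)
    (hΔ₁ : Δ₁ = Real.sqrt (κ₁ ^ 2 - α ^ 2))
    (hΔ₂ : Δ₂ = Real.sqrt (κ₂ ^ 2 - α ^ 2))
    (ζ : ℂ) (hζre : 0 < ζ.re) (hζim : 0 < ζ.im)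
    (hbig : 3 ≤ Real.exp (Δ₁ * ζ.im))
    (δ₁ δ₂ : ℂ)
    (hδ₁ : δ₁ = (Complex.exp (Complex.I * (Δ₂ : ℂ) * ζ) - Complex.exp (Complex.I * (Δ₁ : ℂ) * ζ)) /
      (Complex.exp (-(Complex.I * (Δ₁ : ℂ) * ζ)) - Complex.exp (Complex.I * (Δ₁ : ℂ) * ζ)))
    (hδ₂ : δ₂ = (Complex.exp (Complex.I * (Δ₂ : ℂ) * ζ) - Complex.exp (Complex.I * (Δ₁ : ℂ) * ζ)) /
      (Complex.exp (-(Complex.I * (Δ₂ : ℂ) * ζ)) - Complex.exp (Complex.I * (Δ₂ : ℂ) * ζ)))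
    (χ : ℝ) (hχ : χ = α ^ 2 + Δ₁ * Δ₂)
    (χhat : ℂ)
    (hχhat : χhat = (χ : ℂ) +
      4 * (δ₂ - δ₁ - δ₁ * δ₂) * (α : ℂ) ^ 2 * (Δ₁ : ℂ) * (Δ₂ : ℂ) / (χ : ℂ)) :
    ‖χhat - (χ : ℂ)‖ ≤ 24 * Δ₁ * Δ₂ / (Real.exp (Δ₁ * ζ.im) - 1) :=
  chi_hat_sub_chi_estimate_general κ₁ κ₂ α hκ₁ hκ₁₂ Δ₁ Δ₂ hΔ₁ hΔ₂ ζ hζim hbig δ₁ δ₂ hδ₁ hδ₂ χ hχ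
    χhat hχhat
end
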